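/- For k ≥ 1, the number of all-positive sets that are admissible pinnacle sets of the hyperoctahedral group B_{2k} but are not admissible pinnacle sets of the symmetric group S_{2k} equals 2^{2k-1} − C(2k, k). -/

import Mathlib

/-- The pinnacle set of a word `w : Fin n → ℤ`: values `w i` (for `0 < i < n-1`)
strictly larger than both neighbors. -/
def PinSet (n : ℕ) (w : Fin n → ℤ) : Set ℤ :=
  {x | ∃ (i : ℕ) (h0 : 0 < i) (h2 : i + 1 < n),
    w ⟨i, by omega⟩ = x ∧ w ⟨i - 1, by omega⟩ < w ⟨i, by omega⟩ ∧
      w ⟨i + 1, h2⟩ < w ⟨i, by omega⟩}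

/-- `w : Fin n → ℤ` is the one-line notation of a signed permutation of rank `n`:
the absolute values of its entries are distinct elements of `{1,...,n}`
(hence a bijection onto `{1,...,n}`). -/
def IsSignedPerm (n : ℕ) (w : Fin n → ℤ) : Prop :=
  (∀ i, 1 ≤ |w i| ∧ |w i| ≤ (n : ℤ)) ∧ Function.Injective fun i => |w i|

/-- `S` is an admissible pinnacle set of the hyperoctahedral group `B_n`. -/
def APSB (n : ℕ) (S : Finset ℤ) : Prop :=
  ∃ w : Fin n → ℤ, IsSignedPerm n w ∧ PinSet n w = ↑S

/-- `S` is an admissible pinnacle set of the type `D` group `D_n`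
(signed permutations with an even number of negative one-line entries). -/
def APSD (n : ℕ) (S : Finset ℤ) : Prop :=
  ∃ w : Fin n → ℤ, IsSignedPerm n w ∧
    Even (Finset.univ.filter fun i => w i < 0).card ∧ PinSet n w = ↑S

/-- `S` is an admissible pinnacle set of the symmetric group `S_n`
(an unsigned permutation is a signed permutation with all entries positive). -/
def APSA (n : ℕ) (S : Finset ℤ) : Prop :=
  ∃ w : Fin n → ℤ, IsSignedPerm n w ∧ (∀ i, 0 < w i) ∧ PinSet n w = ↑S

/-- `T` is an admissible pinnacle set of the totally ordered finite set `X ⊆ ℤ`: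
it is the pinnacle set of some arrangement of the elements of `X`. -/
def APSOn (X : Finset ℤ) (T : Finset ℤ) : Prop :=
  ∃ w : Fin X.card → ℤ, Function.Injective w ∧ (∀ i, w i ∈ X) ∧
    PinSet X.card w = ↑T

/-!
A positive set `S` is the pinnacle set of a signed permutation of rank `n` exactly when
`S ⊆ [1, n]` and `2 #S < n`: pinnacles sit at pairwise non-adjacent interior positions, and
conversely the word `-c₀, s₀, -c₁, s₁, …` interleaving `S` with the negated complement has pinnacle
set `S`. It is the pinnacle set of an unsigned permutation exactly when, moreover, every `x ∈ S`
exceeds `2 #{y ∈ S | y ≤ x}`: the pinnacles up to `x`, their right neighbours and the left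
neighbour of the leftmost one carry distinct values in `[1, x]`; conversely this inequality is what
makes the unsigned word `c₀, s₀, c₁, s₁, …` work.

For `n = 2k` the first family has `∑_{d<k} C(2k, d) = 2^{2k-1} - C(2k-1, k-1)` members. Splitting
off the element `n` gives a Pascal recursion showing that `[1, n]` has `C(n-1, d) - C(n-1, d-1)`
admissible `d`-subsets for `0 < d ≤ n / 2`, and these sum to `C(2k-1, k-1) = C(2k, k) / 2`.
-/

open Finset

namespace Finset

/-- The `j`-th smallest element of `S`, counting from `0`; junk value `0` when `#S ≤ j`. -/
noncomputable def nthElem (S : Finset ℤ) (j : ℕ) : ℤ :=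
  if h : j < #S then S.orderEmbOfFin rfl ⟨j, h⟩ else 0

variable {S : Finset ℤ} {i j : ℕ} {x : ℤ}

lemma nthElem_of_lt (h : j < #S) : S.nthElem j = S.orderEmbOfFin rfl ⟨j, h⟩ := dif_pos h

lemma nthElem_mem (h : j < #S) : S.nthElem j ∈ S := by
  rw [nthElem_of_lt h]
  exact S.orderEmbOfFin_mem rfl _

lemma strictMonoOn_nthElem : StrictMonoOn S.nthElem (Set.Iio #S) := by
  intro i hi j hj hij
  rw [nthElem_of_lt hi, nthElem_of_lt hj]
  exact (S.orderEmbOfFin rfl).strictMono (Fin.mk_lt_mk.2 hij)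

lemma nthElem_lt_nthElem (hij : i < j) (hj : j < #S) : S.nthElem i < S.nthElem j :=
  strictMonoOn_nthElem (hij.trans hj) hj hij

lemma exists_nthElem_eq (hx : x ∈ S) : ∃ j < #S, S.nthElem j = x := by
  obtain ⟨⟨j, hj⟩, rfl⟩ : x ∈ Set.range (S.orderEmbOfFin rfl) := by
    rwa [range_orderEmbOfFin]
  exact ⟨j, hj, nthElem_of_lt hj⟩

lemma image_range_nthElem : (range #S).image S.nthElem = S := by
  ext x
  simp only [mem_image, mem_range]
  exact ⟨fun ⟨j, hj, hx⟩ => hx ▸ nthElem_mem hj, exists_nthElem_eq⟩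

lemma filter_lt_nthElem (hj : j < #S) :
    S.filter (· < S.nthElem j) = (range j).image S.nthElem := by
  ext y
  simp only [mem_filter, mem_image, mem_range]
  constructor
  · rintro ⟨hy, hlt⟩
    obtain ⟨i, hi, rfl⟩ := exists_nthElem_eq hy
    exact ⟨i, (strictMonoOn_nthElem.lt_iff_lt hi hj).1 hlt, rfl⟩
  · rintro ⟨i, hij, rfl⟩
    exact ⟨nthElem_mem (hij.trans hj), nthElem_lt_nthElem hij hj⟩

lemma card_filter_lt_nthElem (hj : j < #S) : #(S.filter (· < S.nthElem j)) = j := by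
  rw [filter_lt_nthElem hj, card_image_of_injOn, card_range]
  exact strictMonoOn_nthElem.injOn.mono fun i hi => (mem_range.1 hi).trans hj

lemma card_filter_le_nthElem (hj : j < #S) : #(S.filter (· ≤ S.nthElem j)) = j + 1 := by
  have : S.filter (· ≤ S.nthElem j) = insert (S.nthElem j) (S.filter (· < S.nthElem j)) := by
    ext y
    simp only [mem_filter, mem_insert, le_iff_lt_or_eq]
    constructor
    · rintro ⟨hy, hlt | rfl⟩
      exacts [Or.inr ⟨hy, hlt⟩, Or.inl rfl]
    · rintro (rfl | ⟨hy, hlt⟩)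
      exacts [⟨nthElem_mem hj, Or.inr rfl⟩, ⟨hy, Or.inl hlt⟩]
  rw [this, card_insert_of_notMem (by simp), card_filter_lt_nthElem hj]

lemma nthElem_lt_of_lt_card_filter (h : j < #(S.filter (· < x))) : S.nthElem j < x := by
  have hj : j < #S := h.trans_le (card_filter_le _ _)
  by_contra! hx
  have : S.filter (· < x) ⊆ S.filter (· < S.nthElem j) :=
    fun y hy => by simp only [mem_filter] at hy ⊢; exact ⟨hy.1, hy.2.trans_le hx⟩
  have := card_le_card this
  rw [card_filter_lt_nthElem hj] at this
  omega

end Finset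

def peakPositions (n : ℕ) (u : ℕ → ℤ) : Finset ℕ :=
  (range n).filter fun i => 0 < i ∧ i + 1 < n ∧ u (i - 1) < u i ∧ u (i + 1) < u i

section Peaks

variable {n : ℕ} {u : ℕ → ℤ} {i : ℕ}

lemma mem_peakPositions :
    i ∈ peakPositions n u ↔ 0 < i ∧ i + 1 < n ∧ u (i - 1) < u i ∧ u (i + 1) < u i := by
  simp only [peakPositions, mem_filter, mem_range, and_iff_right_iff_imp]
  omega

lemma exists_eq_comp_val (w : Fin n → ℤ) : ∃ u : ℕ → ℤ, w = fun i : Fin n => u i :=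
  ⟨fun p => if h : p < n then w ⟨p, h⟩ else 0, funext fun i => by simp⟩

lemma pinSet_eq_image_peakPositions (n : ℕ) (u : ℕ → ℤ) :
    PinSet n (fun i : Fin n => u i) = ↑((peakPositions n u).image u) := by
  ext x
  simp only [PinSet, Set.mem_ofPred_eq, coe_image, Set.mem_image, mem_coe, mem_peakPositions]
  constructor
  · rintro ⟨i, h0, h2, rfl, hl, hr⟩
    exact ⟨i, ⟨h0, h2, hl, hr⟩, rfl⟩
  · rintro ⟨i, ⟨h0, h2, hl, hr⟩, rfl⟩
    exact ⟨i, h0, h2, rfl, hl, hr⟩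

lemma succ_notMem_peakPositions (hi : i ∈ peakPositions n u) :
    i + 1 ∉ peakPositions n u := by
  intro hi'
  rw [mem_peakPositions] at hi hi'
  exact absurd hi.2.2.2 (by simpa using hi'.2.2.1.le)

lemma card_union_image_succ {P : Finset ℕ} (hP : ∀ i ∈ P, i + 1 ∉ P) :
    #(P ∪ P.image (· + 1)) = 2 * #P := by
  rw [card_union_of_disjoint, card_image_of_injective _ (add_left_injective 1)]
  · ring
  · rw [disjoint_left]
    intro i hi hi'
    obtain ⟨j, hj, rfl⟩ := mem_image.1 hi'
    exact hP j hj hi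

lemma two_mul_card_peakPositions_lt (hn : 0 < n) : 2 * #(peakPositions n u) < n := by
  have hsub : peakPositions n u ∪ (peakPositions n u).image (· + 1) ⊆ Ico 1 n := by
    intro i hi
    rw [mem_Ico]
    rcases mem_union.1 hi with hi | hi
    · have := mem_peakPositions.1 hi
      omega
    · obtain ⟨j, hj, rfl⟩ := mem_image.1 hi
      have := mem_peakPositions.1 hj
      omega
  have := card_le_card hsub
  rw [card_union_image_succ fun _ => succ_notMem_peakPositions, Nat.card_Ico] at this
  omega

lemma two_mul_card_lt_of_peaks_le {P : Finset ℕ} {x : ℤ} (hP : P ⊆ peakPositions n u)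
    (hne : P.Nonempty) (hle : ∀ p ∈ P, u p ≤ x) (hpos : ∀ i < n, 0 < u i)
    (hinj : Set.InjOn u (Set.Iio n)) : 2 * #P < x := by
  have hpeak : ∀ p ∈ P, 0 < p ∧ p + 1 < n ∧ u (p - 1) < u p ∧ u (p + 1) < u p :=
    fun p hp => mem_peakPositions.1 (hP hp)
  set p₀ := P.min' hne
  have hp₀ := hpeak p₀ (P.min'_mem hne)
  set Q := insert (p₀ - 1) (P ∪ P.image (· + 1))
  have hcard : #Q = 2 * #P + 1 := by
    rw [card_insert_of_notMem, card_union_image_succ]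
    · intro p hp hp'
      exact succ_notMem_peakPositions (hP hp) (hP hp')
    · simp only [mem_union, mem_image, not_or, not_exists, not_and]
      refine ⟨fun h => ?_, fun q hq h => ?_⟩
      · exact absurd (P.min'_le _ h) (by omega)
      · exact absurd (P.min'_le _ hq) (by omega)
  have hQ : ∀ q ∈ Q, q < n ∧ u q ≤ x := by
    simp only [Q, mem_insert, mem_union, mem_image]
    rintro q (rfl | hq | ⟨p, hp, rfl⟩)
    · exact ⟨by omega, (hp₀.2.2.1.trans_le (hle _ (P.min'_mem hne))).le⟩
    · exact ⟨by have := hpeak q hq; omega, hle q hq⟩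
    · exact ⟨(hpeak p hp).2.1, ((hpeak p hp).2.2.2.trans_le (hle p hp)).le⟩
  have hsub : Q.image u ⊆ Icc 1 x := by
    simp only [subset_iff, mem_image, mem_Icc]
    rintro _ ⟨q, hq, rfl⟩
    exact ⟨hpos q (hQ q hq).1, (hQ q hq).2⟩
  have := card_le_card hsub
  rw [card_image_of_injOn (hinj.mono fun q hq => (hQ q hq).1), hcard, Int.card_Icc] at this
  omega

end Peaks

lemma two_mul_card_lt_of_pinSet_eq {n : ℕ} {S : Finset ℤ} (hn : 0 < n) {w : Fin n → ℤ}
    (h : PinSet n w = S) : 2 * #S < n := by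
  obtain ⟨u, rfl⟩ := exists_eq_comp_val w
  rw [pinSet_eq_image_peakPositions, coe_inj] at h
  subst h
  exact (Nat.mul_le_mul_left 2 card_image_le).trans_lt (two_mul_card_peakPositions_lt hn)

def IsAdmissible (S : Finset ℤ) : Prop :=
  ∀ x ∈ S, 2 * (#(S.filter (· ≤ x)) : ℤ) < x

instance : DecidablePred IsAdmissible := fun S =>
  inferInstanceAs (Decidable (∀ x ∈ S, 2 * (#(S.filter (· ≤ x)) : ℤ) < x))

section Necessity

variable {n : ℕ} {S : Finset ℤ}

lemma subset_Icc_of_apsB (hpos : ∀ x ∈ S, 0 < x) (h : APSB n S) : S ⊆ Icc 1 (n : ℤ) := by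
  obtain ⟨w, ⟨hbound, -⟩, hpin⟩ := h
  intro x hx
  obtain ⟨i, -, hi, hwx, -⟩ : x ∈ PinSet n w := by rw [hpin]; exact hx
  have := (hbound ⟨i, by omega⟩).2
  rw [hwx, abs_of_pos (hpos x hx)] at this
  exact mem_Icc.2 ⟨hpos x hx, this⟩

lemma two_mul_card_lt_of_apsB (hn : 0 < n) (h : APSB n S) : 2 * #S < n :=
  let ⟨_, _, hpin⟩ := h
  two_mul_card_lt_of_pinSet_eq hn hpin

lemma isAdmissible_of_apsA (h : APSA n S) : IsAdmissible S := by
  obtain ⟨w, ⟨-, hinj⟩, hwpos, hpin⟩ := h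
  obtain ⟨u, rfl⟩ := exists_eq_comp_val w
  rw [pinSet_eq_image_peakPositions, coe_inj] at hpin
  subst hpin
  intro x hx
  set P := (peakPositions n u).filter (u · ≤ x)
  have hcard : #(((peakPositions n u).image u).filter (· ≤ x)) ≤ #P := by
    rw [filter_image]
    exact card_image_le
  have hne : P.Nonempty := by
    obtain ⟨p, hp, rfl⟩ := mem_image.1 hx
    exact ⟨p, mem_filter.2 ⟨hp, le_rfl⟩⟩
  have hinjOn : Set.InjOn u (Set.Iio n) := fun i hi j hj hij =>
    congrArg Fin.val (@hinj ⟨i, hi⟩ ⟨j, hj⟩ (congrArg abs hij))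
  have := two_mul_card_lt_of_peaks_le (P := P) (filter_subset _ _) hne
    (fun p hp => (mem_filter.1 hp).2) (fun i hi => hwpos ⟨i, hi⟩) hinjOn
  omega

end Necessity

lemma peakPositions_of_alternating {n d : ℕ} {u : ℕ → ℤ} (hdn : 2 * d < n)
    (hrise : ∀ i < 2 * d, i % 2 = 0 → u i < u (i + 1))
    (hfall : ∀ i < 2 * d, i % 2 = 1 → u (i + 1) < u i)
    (htail : (∀ i, 2 * d ≤ i → i + 1 < n → u i < u (i + 1)) ∨
      (∀ i, 2 * d ≤ i → i + 1 < n → u (i + 1) < u i)) :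
    peakPositions n u = (range d).image (2 * · + 1) := by
  ext i
  simp only [mem_peakPositions, mem_image, mem_range]
  constructor
  · rintro ⟨h0, hn, hl, hr⟩
    have hl' : ¬ u (i - 1 + 1) < u (i - 1) := by rw [Nat.sub_add_cancel h0]; exact hl.asymm
    by_cases hi : i < 2 * d
    · rcases Nat.mod_two_eq_zero_or_one i with he | ho
      · exact absurd (hrise i hi he) hr.asymm
      · exact ⟨i / 2, by omega, by omega⟩
    · rcases htail with hup | hdown
      · exact absurd (hup i (by omega) hn) hr.asymm
      · by_cases hid : i = 2 * d
        · exact absurd (hfall (i - 1) (by omega) (by omega)) hl'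
        · exact absurd (hdown (i - 1) (by omega) (by omega)) hl'
  · rintro ⟨j, hj, rfl⟩
    refine ⟨by omega, by omega, ?_, hfall _ (by omega) (by omega)⟩
    simpa using hrise (2 * j) (by omega) (by omega)

/-- The word `ε c₀, s₀, ε c₁, s₁, …, ε c_{d-1}, s_{d-1}, ε c_d, ε c_{d+1}, …` with `d = #S`, where
`s_j` and `c_j` list the elements of `S` and of `C` in increasing order. -/
noncomputable def zigzag (S C : Finset ℤ) (ε : ℤ) (i : ℕ) : ℤ :=
  if i % 2 = 1 ∧ i < 2 * #S then S.nthElem (i / 2)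
  else ε * C.nthElem (if i < 2 * #S then i / 2 else i - #S)

section Zigzag

variable {S C : Finset ℤ} {ε : ℤ} {n i : ℕ}

lemma zigzag_of_odd (ho : i % 2 = 1) (hi : i < 2 * #S) : zigzag S C ε i = S.nthElem (i / 2) :=
  if_pos ⟨ho, hi⟩

lemma zigzag_of_even (he : i % 2 = 0) (hi : i ≤ 2 * #S) :
    zigzag S C ε i = ε * C.nthElem (i / 2) := by
  rw [zigzag, if_neg (by omega)]
  congr 2
  split_ifs <;> omega

lemma zigzag_of_le (hi : 2 * #S ≤ i) : zigzag S C ε i = ε * C.nthElem (i - #S) := by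
  rw [zigzag, if_neg (by omega), if_neg (by omega)]

lemma pinSet_zigzag (hd : 2 * #S < n) (hC : #S + #C = n) (hε : ε = 1 ∨ ε = -1)
    (hlow : ∀ j < #S, ε * C.nthElem j < S.nthElem j)
    (hhigh : ∀ j < #S, ε * C.nthElem (j + 1) < S.nthElem j) :
    PinSet n (fun i : Fin n => zigzag S C ε i) = S := by
  have hpeaks : peakPositions n (zigzag S C ε) = (range #S).image (2 * · + 1) := by
    refine peakPositions_of_alternating hd (fun i hi he => ?_) (fun i hi ho => ?_) ?_
    · rw [zigzag_of_even he hi.le, zigzag_of_odd (by omega) (by omega),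
        show (i + 1) / 2 = i / 2 by omega]
      exact hlow _ (by omega)
    · rw [zigzag_of_even (by omega) (by omega), zigzag_of_odd ho hi,
        show (i + 1) / 2 = i / 2 + 1 by omega]
      exact hhigh _ (by omega)
    · have hmono : ∀ i, 2 * #S ≤ i → i + 1 < n →
          C.nthElem (i - #S) < C.nthElem (i + 1 - #S) :=
        fun i hi hn => nthElem_lt_nthElem (by omega) (by omega)
      have hle : ∀ {i}, 2 * #S ≤ i → 2 * #S ≤ i + 1 := fun hi => by omega
      rcases hε with rfl | rfl
      · exact Or.inl fun i hi hn => by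
          simpa [zigzag_of_le hi, zigzag_of_le (hle hi)] using hmono i hi hn
      · exact Or.inr fun i hi hn => by
          simpa [zigzag_of_le hi, zigzag_of_le (hle hi)] using hmono i hi hn
  rw [pinSet_eq_image_peakPositions, hpeaks, image_image, coe_inj]
  conv_rhs => rw [← image_range_nthElem (S := S)]
  refine image_congr fun j hj => ?_
  simp only [Function.comp_apply]
  rw [zigzag_of_odd (by omega) (by simp at hj; omega), show (2 * j + 1) / 2 = j by omega]

lemma zigzag_one_cases (hC : #S + #C = n) (hd : 2 * #S ≤ n) (hi : i < n) :
    (i % 2 = 1 ∧ i < 2 * #S ∧ zigzag S C 1 i = S.nthElem (i / 2) ∧ i / 2 < #S) ∨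
    (¬ (i % 2 = 1 ∧ i < 2 * #S) ∧
      zigzag S C 1 i = C.nthElem (if i < 2 * #S then i / 2 else i - #S) ∧
      (if i < 2 * #S then i / 2 else i - #S) < #C) := by
  by_cases h : i % 2 = 1 ∧ i < 2 * #S
  · exact Or.inl ⟨h.1, h.2, if_pos h, by omega⟩
  · refine Or.inr ⟨h, by rw [zigzag, if_neg h, one_mul], by split_ifs <;> omega⟩

lemma zigzag_one_mem (hC : #S + #C = n) (hd : 2 * #S ≤ n) (hi : i < n) :
    zigzag S C 1 i ∈ S ∪ C := by
  rcases zigzag_one_cases hC hd hi with ⟨-, -, he, hj⟩ | ⟨-, he, hj⟩ <;> rw [he]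
  exacts [mem_union_left _ (nthElem_mem hj), mem_union_right _ (nthElem_mem hj)]

lemma injOn_zigzag_one (hdisj : Disjoint S C) (hC : #S + #C = n) (hd : 2 * #S ≤ n) :
    Set.InjOn (zigzag S C 1) (Set.Iio n) := by
  intro i hi j hj hij
  rcases zigzag_one_cases hC hd hi with ⟨hi1, hi2, hei, hi3⟩ | ⟨hi1, hei, hi3⟩ <;>
    rcases zigzag_one_cases hC hd hj with ⟨hj1, hj2, hej, hj3⟩ | ⟨hj1, hej, hj3⟩ <;>
    rw [hei, hej] at hij
  · have := strictMonoOn_nthElem.injOn hi3 hj3 hij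
    omega
  · exact (disjoint_left.1 hdisj (nthElem_mem hi3) (hij ▸ nthElem_mem hj3)).elim
  · exact (disjoint_left.1 hdisj (nthElem_mem hj3) (hij ▸ nthElem_mem hi3)).elim
  · have := strictMonoOn_nthElem.injOn hi3 hj3 hij
    split_ifs at this <;> omega

lemma abs_zigzag (hS : ∀ x ∈ S, 0 ≤ x) (hC : ∀ x ∈ C, 0 ≤ x) (hε : ε = 1 ∨ ε = -1) (i : ℕ) :
    |zigzag S C ε i| = zigzag S C 1 i := by
  have hnonneg : ∀ {T : Finset ℤ}, (∀ x ∈ T, 0 ≤ x) → ∀ j, 0 ≤ T.nthElem j := fun hT j => by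
    unfold nthElem
    split_ifs with hj
    exacts [hT _ (orderEmbOfFin_mem _ _ _), le_rfl]
  have hε' : |ε| = 1 := by rcases hε with rfl | rfl <;> simp
  unfold zigzag
  split_ifs
  · exact abs_of_nonneg (hnonneg hS _)
  all_goals rw [abs_mul, hε', one_mul, one_mul, abs_of_nonneg (hnonneg hC _)]

end Zigzag

section Sufficiency

variable {n : ℕ} {S : Finset ℤ}

lemma card_add_card_Icc_sdiff (hS : S ⊆ Icc 1 (n : ℤ)) : #S + #(Icc 1 (n : ℤ) \ S) = n := by
  rw [← card_union_of_disjoint disjoint_sdiff, union_sdiff_of_subset hS, Int.card_Icc]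
  simp

lemma isSignedPerm_zigzag {ε : ℤ} (hS : S ⊆ Icc 1 (n : ℤ)) (hd : 2 * #S ≤ n)
    (hε : ε = 1 ∨ ε = -1) : IsSignedPerm n (fun i : Fin n => zigzag S (Icc 1 (n : ℤ) \ S) ε i) := by
  have hC := card_add_card_Icc_sdiff hS
  have hunion : S ∪ (Icc 1 (n : ℤ) \ S) = Icc 1 (n : ℤ) := union_sdiff_of_subset hS
  have hpos : ∀ x ∈ S ∪ (Icc 1 (n : ℤ) \ S), 0 ≤ x := fun x hx => by
    rw [hunion, mem_Icc] at hx
    omega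
  simp only [IsSignedPerm, abs_zigzag (fun x hx => hpos x (mem_union_left _ hx))
    (fun x hx => hpos x (mem_union_right _ hx)) hε]
  refine ⟨fun i => ?_, fun i j hij => Fin.ext (injOn_zigzag_one disjoint_sdiff hC hd i.2 j.2 hij)⟩
  have := zigzag_one_mem hC hd i.2
  rw [hunion] at this
  exact mem_Icc.1 this

lemma nthElem_Icc_sdiff_succ_lt (hS : S ⊆ Icc 1 (n : ℤ)) (hadm : IsAdmissible S) {j : ℕ}
    (hj : j < #S) : (Icc 1 (n : ℤ) \ S).nthElem (j + 1) < S.nthElem j := by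
  set x := S.nthElem j
  have hx := hadm x (nthElem_mem hj)
  rw [card_filter_le_nthElem hj] at hx
  have hxn := (mem_Icc.1 (hS (nthElem_mem hj))).2
  have hsplit : #(S.filter (· < x)) + #((Icc 1 (n : ℤ) \ S).filter (· < x)) = #(Ico 1 x) := by
    rw [← card_union_of_disjoint (disjoint_filter_filter disjoint_sdiff), ← filter_union,
      union_sdiff_of_subset hS]
    congr 1
    ext y
    simp only [mem_filter, mem_Icc, mem_Ico]
    omega
  rw [card_filter_lt_nthElem hj, Int.card_Ico] at hsplit
  exact nthElem_lt_of_lt_card_filter (by omega)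

lemma apsB_of_subset_Icc (hS : S ⊆ Icc 1 (n : ℤ)) (hd : 2 * #S < n) : APSB n S := by
  have hC := card_add_card_Icc_sdiff hS
  have hpos : ∀ {T : Finset ℤ} {j : ℕ}, T ⊆ Icc 1 (n : ℤ) → j < #T → 0 < T.nthElem j :=
    fun hT hj => (mem_Icc.1 (hT (nthElem_mem hj))).1
  refine ⟨_, isSignedPerm_zigzag hS hd.le (Or.inr rfl),
    pinSet_zigzag hd hC (Or.inr rfl) (fun j hj => ?_) (fun j hj => ?_)⟩
  · have := hpos sdiff_subset (show j < #(Icc 1 (n : ℤ) \ S) by omega)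
    have := hpos hS hj
    linarith
  · have := hpos sdiff_subset (show j + 1 < #(Icc 1 (n : ℤ) \ S) by omega)
    have := hpos hS hj
    linarith

lemma two_mul_card_lt_of_isAdmissible (hS : S ⊆ Icc 1 (n : ℤ)) (hadm : IsAdmissible S)
    (hn : 0 < n) : 2 * #S < n := by
  rcases S.eq_empty_or_nonempty with rfl | hne
  · simpa using hn
  · have hmax := hadm _ (S.max'_mem hne)
    rw [filter_true_of_mem fun y hy => S.le_max' y hy] at hmax
    have := (mem_Icc.1 (hS (S.max'_mem hne))).2
    omega

lemma apsA_of_isAdmissible (hS : S ⊆ Icc 1 (n : ℤ)) (hadm : IsAdmissible S) (hn : 0 < n) :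
    APSA n S := by
  have hd := two_mul_card_lt_of_isAdmissible hS hadm hn
  have hC := card_add_card_Icc_sdiff hS
  have hhigh := fun j (hj : j < #S) => nthElem_Icc_sdiff_succ_lt hS hadm hj
  refine ⟨_, isSignedPerm_zigzag hS hd.le (Or.inl rfl), fun i => ?_,
    pinSet_zigzag hd hC (Or.inl rfl) (fun j hj => ?_) (fun j hj => by simpa using hhigh j hj)⟩
  · have := zigzag_one_mem hC hd.le i.2
    rw [union_sdiff_of_subset hS, mem_Icc] at this
    exact this.1
  · rw [one_mul]
    exact (nthElem_lt_nthElem j.lt_succ_self (by omega)).trans (hhigh j hj)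

end Sufficiency

lemma isAdmissible_insert_iff {T : Finset ℤ} {a : ℤ} (hlt : ∀ y ∈ T, y < a)
    (hcard : 2 * #T + 2 < a) : IsAdmissible (insert a T) ↔ IsAdmissible T := by
  have hfilter : ∀ y ∈ T, (insert a T).filter (· ≤ y) = T.filter (· ≤ y) := fun y hy => by
    rw [filter_insert, if_neg (hlt y hy).not_ge]
  have haT : a ∉ T := fun h => (hlt a h).false
  constructor
  · intro h y hy
    rw [← hfilter y hy]
    exact h y (mem_insert_of_mem hy)
  · intro h y hy
    rcases mem_insert.1 hy with rfl | hy
    · rw [filter_true_of_mem fun z hz => ?_, card_insert_of_notMem haT]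
      · push_cast
        omega
      · rcases mem_insert.1 hz with rfl | hz
        exacts [le_rfl, (hlt z hz).le]
    · rw [hfilter y hy]
      exact h y hy

noncomputable def numAdmissible (n d : ℕ) : ℕ :=
  #((powersetCard d (Icc 1 (n : ℤ))).filter IsAdmissible)

lemma numAdmissible_zero (n : ℕ) : numAdmissible n 0 = 1 := by
  rw [numAdmissible, powersetCard_zero, filter_singleton, if_pos (by simp [IsAdmissible]),
    card_singleton]

lemma numAdmissible_eq_zero {n d : ℕ} (h : n ≤ 2 * (d + 1)) : numAdmissible n (d + 1) = 0 := by
  rw [numAdmissible, card_eq_zero, filter_eq_empty_iff]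
  intro S hS hadm
  obtain ⟨hsub, hcard⟩ := mem_powersetCard.1 hS
  have := card_add_card_Icc_sdiff hsub
  have := two_mul_card_lt_of_isAdmissible hsub hadm (by omega)
  omega

lemma numAdmissible_succ_succ {n d : ℕ} (h : 2 * (d + 1) < n + 1) :
    numAdmissible (n + 1) (d + 1) = numAdmissible n (d + 1) + numAdmissible n d := by
  have hnew : ((n + 1 : ℕ) : ℤ) ∉ Icc 1 (n : ℤ) := by simp
  have hIcc : Icc 1 ((n + 1 : ℕ) : ℤ) = insert ((n + 1 : ℕ) : ℤ) (Icc 1 (n : ℤ)) := by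
    push_cast
    exact (insert_Icc_right_eq_Icc_add_one (by omega)).symm
  rw [numAdmissible, hIcc, powersetCard_succ_insert hnew, filter_union,
    card_union_of_disjoint, filter_image, card_image_of_injOn]
  · congr 2
    refine filter_congr fun T hT => ?_
    obtain ⟨hsub, hcard⟩ := mem_powersetCard.1 hT
    exact isAdmissible_insert_iff (fun y hy => by have := mem_Icc.1 (hsub hy); omega)
      (by omega)
  · intro T hT T' hT' hTT'
    have hnT : ∀ {T : Finset ℤ}, T ∈ ((powersetCard d (Icc 1 (n : ℤ))).filter
        fun T => IsAdmissible (insert ((n + 1 : ℕ) : ℤ) T)) → ((n + 1 : ℕ) : ℤ) ∉ T :=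
      fun hT h => hnew (mem_powersetCard.1 (mem_filter.1 hT).1 |>.1 h)
    rw [← erase_insert (hnT hT), ← erase_insert (hnT hT')]
    exact congrArg (fun U => U.erase ((n + 1 : ℕ) : ℤ)) hTT'
  · refine disjoint_filter_filter (disjoint_left.2 fun T hT hT' => ?_)
    obtain ⟨T', -, rfl⟩ := mem_image.1 hT'
    exact hnew ((mem_powersetCard.1 hT).1 (mem_insert_self _ _))

lemma numAdmissible_add_choose {n d : ℕ} (h : 2 * d + 1 ≤ n) :
    numAdmissible (n + 1) (d + 1) + n.choose d = n.choose (d + 1) := by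
  induction n generalizing d with
  | zero => omega
  | succ n ih =>
    rcases (show 2 * d + 1 = n + 1 ∨ 2 * d + 1 ≤ n by omega) with hn | hn
    · obtain rfl : n = 2 * d := by omega
      rw [numAdmissible_eq_zero (by omega), zero_add, Nat.choose_symm_half]
    · have ih₁ := ih hn
      rw [numAdmissible_succ_succ (by omega), Nat.choose_succ_succ' n d]
      rcases d with _ | e
      · simp only [numAdmissible_zero, Nat.choose_zero_right] at ih₁ ⊢
        omega
      · have ih₂ := ih (d := e) (by omega)
        rw [Nat.choose_succ_succ' n e]
        omega

lemma sum_numAdmissible {n j : ℕ} (h : 2 * j ≤ n + 1) :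
    ∑ d ∈ range (j + 1), numAdmissible (n + 1) d = n.choose j := by
  induction j with
  | zero => simp [numAdmissible_zero]
  | succ j ih =>
    rw [sum_range_succ, ih (by omega), add_comm, numAdmissible_add_choose (by omega)]

lemma card_filter_powerset_eq_sum {α : Type*} (s : Finset α) (p : Finset α → Prop)
    [DecidablePred p] {m : ℕ} (h : ∀ t ⊆ s, p t → #t < m) :
    #(s.powerset.filter p) = ∑ d ∈ range m, #((powersetCard d s).filter p) := by
  rw [card_eq_sum_card_fiberwise (f := card) (t := range m) fun t ht => ?_]
  · refine sum_congr rfl fun d _ => congrArg card ?_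
    ext t
    simp only [mem_filter, mem_powerset, mem_powersetCard]
    tauto
  · simp only [coe_filter, mem_powerset, Set.mem_ofPred_eq] at ht
    exact mem_range.2 (h t ht.1 ht.2)

lemma sum_range_choose_add_choose (m : ℕ) :
    ∑ d ∈ range (m + 1), (2 * m + 2).choose d + (2 * m + 1).choose m = 2 * 4 ^ m := by
  have h₁ := Nat.sum_range_choose_halfway m
  have h₂ := Nat.sum_range_choose_halfway m
  rw [sum_range_succ'] at h₁
  rw [sum_range_succ] at h₂
  rw [sum_range_succ', show 2 * m + 2 = 2 * m + 1 + 1 by ring]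
  simp only [Nat.choose_succ_succ', sum_add_distrib, Nat.choose_zero_right] at h₁ ⊢
  omega

lemma choose_two_mul_add_two_succ (m : ℕ) :
    (2 * m + 2).choose (m + 1) = 2 * (2 * m + 1).choose m := by
  rw [Nat.choose_succ_succ', Nat.choose_symm_half]
  ring

lemma card_filter_two_mul_card_lt_powerset (m : ℕ) :
    #((Icc 1 ((2 * m + 2 : ℕ) : ℤ)).powerset.filter fun S => 2 * #S < 2 * m + 2) =
      ∑ d ∈ range (m + 1), (2 * m + 2).choose d := by
  rw [card_filter_powerset_eq_sum _ _ (m := m + 1) fun t _ ht => by omega]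
  refine sum_congr rfl fun d hd => ?_
  rw [filter_true_of_mem fun t ht => ?_, card_powersetCard, Int.card_Icc, add_sub_cancel_right,
    Int.toNat_natCast]
  · rw [(mem_powersetCard.1 ht).2]
    have := mem_range.1 hd
    omega

lemma card_filter_isAdmissible_powerset (m : ℕ) :
    #((Icc 1 ((2 * m + 2 : ℕ) : ℤ)).powerset.filter IsAdmissible) = (2 * m + 1).choose m := by
  rw [card_filter_powerset_eq_sum _ _ (m := m + 1) fun t ht hadm => by
    have := two_mul_card_lt_of_isAdmissible ht hadm (by omega)
    omega]
  exact sum_numAdmissible (by omega)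

lemma apsB_and_not_apsA_iff {n : ℕ} {S : Finset ℤ} (hn : 0 < n) (hpos : ∀ x ∈ S, 0 < x) :
    APSB n S ∧ ¬ APSA n S ↔ S ⊆ Icc 1 (n : ℤ) ∧ 2 * #S < n ∧ ¬ IsAdmissible S := by
  constructor
  · rintro ⟨hB, hA⟩
    have hS := subset_Icc_of_apsB hpos hB
    exact ⟨hS, two_mul_card_lt_of_apsB hn hB, fun hadm => hA (apsA_of_isAdmissible hS hadm hn)⟩
  · rintro ⟨hS, hd, hadm⟩
    exact ⟨apsB_of_subset_Icc hS hd, fun hA => hadm (isAdmissible_of_apsA hA)⟩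

theorem stmt19 (k : ℕ) (hk : 1 ≤ k) :
    {S : Finset ℤ | (∀ x ∈ S, 0 < x) ∧ APSB (2 * k) S ∧ ¬ APSA (2 * k) S}.ncard
      = 2 ^ (2 * k - 1) - Nat.choose (2 * k) k := by
  obtain ⟨m, rfl⟩ : ∃ m, k = m + 1 := ⟨k - 1, by omega⟩
  rw [show 2 * (m + 1) = 2 * m + 2 by ring]
  set s := Icc 1 ((2 * m + 2 : ℕ) : ℤ)
  have hset : {S : Finset ℤ | (∀ x ∈ S, 0 < x) ∧ APSB (2 * m + 2) S ∧ ¬ APSA (2 * m + 2) S} =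
      ↑(s.powerset.filter fun S => 2 * #S < 2 * m + 2 ∧ ¬ IsAdmissible S) := by
    ext S
    simp only [Set.mem_ofPred_eq, coe_filter, mem_powerset]
    refine ⟨fun ⟨hpos, h⟩ => (apsB_and_not_apsA_iff (by omega) hpos).1 h, fun h => ?_⟩
    have hpos : ∀ x ∈ S, 0 < x := fun x hx => (mem_Icc.1 (h.1 hx)).1
    exact ⟨hpos, (apsB_and_not_apsA_iff (by omega) hpos).2 h⟩
  have hsplit := card_filter_add_card_filter_not
    (s := s.powerset.filter fun S => 2 * #S < 2 * m + 2) (p := IsAdmissible)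
  rw [filter_filter, filter_filter, filter_congr fun S hS => and_iff_right_of_imp fun hadm =>
    two_mul_card_lt_of_isAdmissible (mem_powerset.1 hS) hadm (by omega),
    card_filter_isAdmissible_powerset, card_filter_two_mul_card_lt_powerset] at hsplit
  rw [hset, Set.ncard_coe_finset, choose_two_mul_add_two_succ,
    show 2 * m + 2 - 1 = 2 * m + 1 by omega, pow_succ, pow_mul, show 2 ^ 2 = 4 by rfl]
  have := sum_range_choose_add_choose m
  omega
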